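/- Let (R, +, ·) be a hyperring. The relations α₊* and α₍ₓ₎* (transitive closures of α₊ and α₍ₓ₎) are strongly regular relations on both (R, +) and (R, ·). -/

import Mathlib

/-- A hyperoperation on `H`: every pair maps to a nonempty subset. -/
structure Hyperop (H : Type*) where
  op : H → H → Set H
  op_nonempty : ∀ x y, (op x y).Nonempty

namespace Hyperop

variable {H : Type*}

/-- Extension of the hyperoperation to subsets. -/
def sop (h : Hyperop H) (A B : Set H) : Set H := ⋃ a ∈ A, ⋃ b ∈ B, h.op a b

/-- Associativity of a hyperoperation (on sets). -/
def IsAssoc (h : Hyperop H) : Prop :=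
  ∀ x y z : H, h.sop (h.op x y) {z} = h.sop {x} (h.op y z)

/-- Reproduction axiom: `x ∘ H = H ∘ x = H`. -/
def IsReproductive (h : Hyperop H) : Prop :=
  ∀ x y : H, (∃ u, y ∈ h.op x u) ∧ (∃ v, y ∈ h.op v x)

/-- A relation `T` is strongly regular (on both sides) w.r.t. `h`. -/
def StronglyRegular (h : Hyperop H) (T : H → H → Prop) : Prop :=
  ∀ x y, T x y → ∀ a : H,
    (∀ u ∈ h.op a x, ∀ v ∈ h.op a y, T u v) ∧
    (∀ u ∈ h.op x a, ∀ v ∈ h.op y a, T u v)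

/-- `h.foldl x l` : the set `x ∘ l₁ ∘ ⋯ ∘ lₖ`. -/
def foldl (h : Hyperop H) : H → List H → Set H
  | x, [] => {x}
  | x, y :: l => ⋃ z ∈ h.op x y, h.foldl z l

/-- Hyper-"product" of a nonempty list of elements (empty list gives `∅`). -/
def listProd (h : Hyperop H) : List H → Set H
  | [] => ∅
  | x :: l => h.foldl x l

/-- Fold a list of subsets onto a subset. -/
def setFold (h : Hyperop H) : Set H → List (Set H) → Set H
  | A, [] => A
  | A, B :: l => h.setFold (h.sop A B) l

end Hyperop

/-- `l'` is obtained from `l` by inserting one consecutive block of copies of `e`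
(or is equal to `l`). -/
def InsertBlock {α : Type*} (e : α) (l l' : List α) : Prop :=
  l' = l ∨ ∃ (p q : List α) (k : ℕ), 1 ≤ k ∧ l = p ++ q ∧ l' = p ++ List.replicate k e ++ q

/-- A hyperring: `(R, +)` a hypergroup, `(R, ·)` a semi-hypergroup,
with two-sided distributivity. -/
structure Hyperring (R : Type*) where
  add : Hyperop R
  mul : Hyperop R
  add_assoc : add.IsAssoc
  add_repro : add.IsReproductive
  mul_assoc : mul.IsAssoc
  left_distrib : ∀ x y z : R, mul.sop {x} (add.op y z) = add.sop (mul.op x y) (mul.op x z)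
  right_distrib : ∀ x y z : R, mul.sop (add.op y z) {x} = add.sop (mul.op y x) (mul.op z x)

namespace Hyperring

variable {R : Type*}

/-- Sum of products: `ll` is a list of lists; each inner list is multiplied,
the results are added up. -/
def SOP (S : Hyperring R) : List (List R) → Set R
  | [] => ∅
  | l :: t => S.add.setFold (S.mul.listProd l) (t.map S.mul.listProd)

/-- A valid sum-of-products expression: nonempty list of nonempty lists. -/
def ValidExpr (S : Hyperring R) (ll : List (List R)) : Prop :=
  ll ≠ [] ∧ ∀ l ∈ ll, l ≠ []

/-- The Vougiouklis relation `Γ`. -/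
def gamma (S : Hyperring R) (x y : R) : Prop :=
  ∃ ll, S.ValidExpr ll ∧ x ∈ S.SOP ll ∧ y ∈ S.SOP ll

/-- The relation `α₊` : permuting the summands. -/
def alphaPlus (S : Hyperring R) (x y : R) : Prop :=
  ∃ ll ll', S.ValidExpr ll ∧ ll.Perm ll' ∧ x ∈ S.SOP ll ∧ y ∈ S.SOP ll'

/-- The relation `α×` : permuting the factors inside each product. -/
def alphaTimes (S : Hyperring R) (x y : R) : Prop :=
  ∃ ll ll', S.ValidExpr ll ∧ List.Forall₂ List.Perm ll ll' ∧ x ∈ S.SOP ll ∧ y ∈ S.SOP ll'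

/-- The Davvaz–Vougiouklis relation `α` : permuting factors inside each
product and then permuting the summands. -/
def alpha (S : Hyperring R) (x y : R) : Prop :=
  ∃ ll mid ll', S.ValidExpr ll ∧ List.Forall₂ List.Perm ll mid ∧ mid.Perm ll' ∧
    x ∈ S.SOP ll ∧ y ∈ S.SOP ll'

/-- Condition `𝔓ₑ` : each product of the second expression is obtained from the
corresponding product of the first by inserting a block of copies of `e`. -/
def CondP (S : Hyperring R) (e : R) (ll ll' : List (List R)) : Prop :=
  List.Forall₂ (InsertBlock e) ll ll'

/-- The relation `(λ^e_×)ₘ`. -/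
def lamTimesN (S : Hyperring R) (e : R) (m : ℕ) (x y : R) : Prop :=
  ∃ ll ll', ll.length = m ∧ S.ValidExpr ll ∧ S.CondP e ll ll' ∧
    ((x ∈ S.SOP ll ∧ y ∈ S.SOP ll') ∨ (x ∈ S.SOP ll' ∧ y ∈ S.SOP ll))

/-- The relation `λ^e_×`. -/
def lamTimes (S : Hyperring R) (e : R) (x y : R) : Prop :=
  ∃ m, 1 ≤ m ∧ S.lamTimesN e m x y

/-- The relation `λₑ = λ^e_× ∪ α₊`. -/
def lam (S : Hyperring R) (e : R) (x y : R) : Prop :=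
  S.lamTimes e x y ∨ S.alphaPlus x y

/-- The relation `Λₑ = λ^e_× ∪ α`. -/
def Lam (S : Hyperring R) (e : R) (x y : R) : Prop :=
  S.lamTimes e x y ∨ S.alpha x y

/-- `M` is a `λₑ`-part. -/
def IsLamPart (S : Hyperring R) (e : R) (M : Set R) : Prop :=
  (∀ ll ll', S.ValidExpr ll → ll.Perm ll' → (S.SOP ll ∩ M).Nonempty → S.SOP ll' ⊆ M) ∧
  (∀ ll ll', S.ValidExpr ll → (S.CondP e ll ll' ∨ S.CondP e ll' ll) →
      (S.SOP ll ∩ M).Nonempty → S.SOP ll' ⊆ M)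

/-- A `λₑ`-strong hyperring. -/
def LamStrong (S : Hyperring R) (e : R) : Prop :=
  (∀ x y, Relation.TransGen (S.lam e) x y →
      (S.mul.op x e ∩ S.mul.op y e).Nonempty ∧ (S.mul.op e x ∩ S.mul.op e y).Nonempty) ∧
  (∀ x z, z ∈ S.mul.op x e → x ∈ S.mul.op z e) ∧
  (∀ x z, z ∈ S.mul.op e x → x ∈ S.mul.op e z)

end Hyperring

/-!
Both `α₊` and `α×` are induced by a relation between sum-of-products expressions
(permuting the summands, resp. the factors of each summand) that is preserved by adding a
summand `[a]` at either end and by multiplying every summand by `a` on either side.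
By associativity of `+`, `a + Σ Πᵢ` is the value of the expression with the extra
summand `a`; by distributivity, `a · Σ Πᵢ ⊆ Σ (a · Πᵢ)`. Hence `a ∘ x` and `a ∘ y` lie in the
values of two related expressions. Strong regularity then passes to the transitive closure
because every `a ∘ y` is nonempty.
-/

namespace Hyperop

variable {H : Type*} (h : Hyperop H)

theorem mem_sop {u : H} {A B : Set H} :
    u ∈ h.sop A B ↔ ∃ a ∈ A, ∃ b ∈ B, u ∈ h.op a b := by
  simp [sop]

theorem mem_sop_of_mem {a b u : H} {A B : Set H} (ha : a ∈ A) (hb : b ∈ B)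
    (hu : u ∈ h.op a b) : u ∈ h.sop A B :=
  h.mem_sop.2 ⟨a, ha, b, hb, hu⟩

theorem mem_sop_singleton_left {a u : H} {B : Set H} :
    u ∈ h.sop {a} B ↔ ∃ b ∈ B, u ∈ h.op a b := by
  simp [sop]

theorem mem_sop_singleton_right {a u : H} {A : Set H} :
    u ∈ h.sop A {a} ↔ ∃ b ∈ A, u ∈ h.op b a := by
  simp [sop]

theorem sop_mono {A A' B B' : Set H} (hA : A ⊆ A') (hB : B ⊆ B') :
    h.sop A B ⊆ h.sop A' B' := by
  intro u hu
  obtain ⟨a, ha, b, hb, hu⟩ := h.mem_sop.1 hu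
  exact h.mem_sop_of_mem (hA ha) (hB hb) hu

theorem IsAssoc.sop_assoc {h : Hyperop H} (hass : h.IsAssoc) (A B C : Set H) :
    h.sop (h.sop A B) C = h.sop A (h.sop B C) := by
  ext u
  have hpoint : ∀ x y z, u ∈ h.sop (h.op x y) {z} ↔ u ∈ h.sop {x} (h.op y z) := by
    intro x y z
    rw [hass]
  simp only [mem_sop, Set.mem_singleton_iff, exists_eq_left] at hpoint ⊢
  constructor
  · rintro ⟨w, ⟨a, ha, b, hb, hw⟩, c, hc, hu⟩
    obtain ⟨v, hv, hu⟩ := (hpoint a b c).1 ⟨w, hw, hu⟩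
    exact ⟨a, ha, v, ⟨b, hb, c, hc, hv⟩, hu⟩
  · rintro ⟨a, ha, v, ⟨b, hb, c, hc, hv⟩, hu⟩
    obtain ⟨w, hw, hu⟩ := (hpoint a b c).2 ⟨v, hv, hu⟩
    exact ⟨w, ⟨a, ha, b, hb, hw⟩, c, hc, hu⟩

theorem setFold_sop {h : Hyperop H} (hass : h.IsAssoc) (A B : Set H) (l : List (Set H)) :
    h.setFold (h.sop A B) l = h.sop A (h.setFold B l) := by
  induction l generalizing B with
  | nil => rfl
  | cons C l ih => rw [setFold, hass.sop_assoc, ih, setFold]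

theorem setFold_append_singleton (A B : Set H) (l : List (Set H)) :
    h.setFold A (l ++ [B]) = h.sop (h.setFold A l) B := by
  induction l generalizing A with
  | nil => rfl
  | cons C l ih => exact ih (h.sop A C)

theorem setFold_mono {A A' : Set H} {l l' : List (Set H)} (hA : A ⊆ A')
    (hl : List.Forall₂ (· ⊆ ·) l l') : h.setFold A l ⊆ h.setFold A' l' := by
  induction hl generalizing A A' with
  | nil => exact hA
  | cons hB _ ih => exact ih (h.sop_mono hA hB)

theorem sop_singleton_foldl_subset {h : Hyperop H} (hass : h.IsAssoc) (a b : H) (l : List H) :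
    h.sop {a} (h.foldl b l) ⊆ h.foldl a (b :: l) := by
  induction l generalizing b with
  | nil => simp [foldl, sop]
  | cons c l ih =>
    intro u hu
    obtain ⟨x, hx, hu⟩ := h.mem_sop_singleton_left.1 hu
    simp only [foldl, Set.mem_iUnion] at hx ⊢
    obtain ⟨z, hz, hx⟩ := hx
    obtain ⟨t, ht, hu⟩ := Set.mem_iUnion₂.1 (ih z (h.mem_sop_of_mem rfl hx hu))
    have ht' : t ∈ h.sop (h.op a b) {c} := by
      rw [hass]
      exact h.mem_sop_of_mem rfl hz ht
    obtain ⟨w, hw, ht⟩ := h.mem_sop_singleton_right.1 ht'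
    exact ⟨w, hw, t, ht, hu⟩

theorem foldl_append_singleton (a b : H) (l : List H) :
    h.foldl b (l ++ [a]) = h.sop (h.foldl b l) {a} := by
  induction l generalizing b with
  | nil => simp [foldl, sop]
  | cons c l ih => simp [foldl, ih, sop]

theorem sop_singleton_listProd_subset {h : Hyperop H} (hass : h.IsAssoc) (a : H) :
    ∀ l : List H, h.sop {a} (h.listProd l) ⊆ h.listProd (a :: l)
  | [] => by simp [listProd, sop]
  | b :: l => sop_singleton_foldl_subset hass a b l

theorem sop_listProd_singleton_subset (a : H) :
    ∀ l : List H, h.sop (h.listProd l) {a} ⊆ h.listProd (l ++ [a])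
  | [] => by simp [listProd, sop]
  | b :: l => (h.foldl_append_singleton a b l).ge

theorem StronglyRegular.transGen {h : Hyperop H} {T : H → H → Prop}
    (hT : h.StronglyRegular T) : h.StronglyRegular (Relation.TransGen T) := by
  intro x y hxy a
  induction hxy with
  | single hxy =>
    exact ⟨fun u hu v hv => .single ((hT _ _ hxy a).1 u hu v hv),
      fun u hu v hv => .single ((hT _ _ hxy a).2 u hu v hv)⟩
  | tail _ hyz ih =>
    constructor
    · intro u hu v hv
      obtain ⟨w, hw⟩ := h.op_nonempty a _
      exact (ih.1 u hu w hw).tail ((hT _ _ hyz a).1 w hw v hv)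
    · intro u hu v hv
      obtain ⟨w, hw⟩ := h.op_nonempty _ a
      exact (ih.2 u hu w hw).tail ((hT _ _ hyz a).2 w hw v hv)

end Hyperop

namespace Hyperring

variable {R : Type*} (S : Hyperring R)

theorem sop_left_distrib_subset (A X Y : Set R) :
    S.mul.sop A (S.add.sop X Y) ⊆ S.add.sop (S.mul.sop A X) (S.mul.sop A Y) := by
  intro u hu
  obtain ⟨a, ha, w, hw, hu⟩ := S.mul.mem_sop.1 hu
  obtain ⟨x, hx, y, hy, hw⟩ := S.add.mem_sop.1 hw
  have hu' : u ∈ S.mul.sop {a} (S.add.op x y) := S.mul.mem_sop_of_mem rfl hw hu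
  rw [S.left_distrib] at hu'
  obtain ⟨p, hp, q, hq, hu⟩ := S.add.mem_sop.1 hu'
  exact S.add.mem_sop_of_mem (S.mul.mem_sop_of_mem ha hx hp) (S.mul.mem_sop_of_mem ha hy hq) hu

theorem sop_right_distrib_subset (A X Y : Set R) :
    S.mul.sop (S.add.sop X Y) A ⊆ S.add.sop (S.mul.sop X A) (S.mul.sop Y A) := by
  intro u hu
  obtain ⟨w, hw, a, ha, hu⟩ := S.mul.mem_sop.1 hu
  obtain ⟨x, hx, y, hy, hw⟩ := S.add.mem_sop.1 hw
  have hu' : u ∈ S.mul.sop (S.add.op x y) {a} := S.mul.mem_sop_of_mem hw rfl hu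
  rw [S.right_distrib] at hu'
  obtain ⟨p, hp, q, hq, hu⟩ := S.add.mem_sop.1 hu'
  exact S.add.mem_sop_of_mem (S.mul.mem_sop_of_mem hx ha hp) (S.mul.mem_sop_of_mem hy ha hq) hu

theorem setFold_left_distrib_subset (A B : Set R) (l : List (Set R)) :
    S.mul.sop A (S.add.setFold B l) ⊆
      S.add.setFold (S.mul.sop A B) (l.map (S.mul.sop A)) := by
  induction l generalizing B with
  | nil => exact subset_rfl
  | cons C l ih =>
    exact (ih _).trans (S.add.setFold_mono (A' := S.add.sop (S.mul.sop A B) (S.mul.sop A C))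
      (S.sop_left_distrib_subset A B C) (List.forall₂_refl _))

theorem setFold_right_distrib_subset (A B : Set R) (l : List (Set R)) :
    S.mul.sop (S.add.setFold B l) A ⊆
      S.add.setFold (S.mul.sop B A) (l.map (S.mul.sop · A)) := by
  induction l generalizing B with
  | nil => exact subset_rfl
  | cons C l ih =>
    exact (ih _).trans (S.add.setFold_mono (A' := S.add.sop (S.mul.sop B A) (S.mul.sop C A))
      (S.sop_right_distrib_subset A B C) (List.forall₂_refl _))

theorem ne_nil_of_mem_SOP {x : R} {ll : List (List R)} (hx : x ∈ S.SOP ll) : ll ≠ [] := by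
  rintro rfl
  exact hx

theorem SOP_singleton_cons (a : R) {ll : List (List R)} (hll : ll ≠ []) :
    S.SOP ([a] :: ll) = S.add.sop {a} (S.SOP ll) := by
  obtain ⟨l, t, rfl⟩ := List.exists_cons_of_ne_nil hll
  exact S.add.setFold_sop S.add_assoc {a} _ _

theorem SOP_append_singleton (a : R) {ll : List (List R)} (hll : ll ≠ []) :
    S.SOP (ll ++ [[a]]) = S.add.sop (S.SOP ll) {a} := by
  obtain ⟨l, t, rfl⟩ := List.exists_cons_of_ne_nil hll
  simp only [SOP, List.cons_append, List.map_append, List.map_singleton]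
  exact S.add.setFold_append_singleton _ {a} _

theorem SOP_left_distrib_subset (a : R) :
    ∀ ll : List (List R), S.mul.sop {a} (S.SOP ll) ⊆ S.SOP (ll.map (a :: ·))
  | [] => by simp [SOP, Hyperop.sop]
  | l :: t => by
    refine (S.setFold_left_distrib_subset {a} _ _).trans (S.add.setFold_mono
      (S.mul.sop_singleton_listProd_subset S.mul_assoc a l) ?_)
    simpa only [List.map_map, List.forall₂_map_left_iff, List.forall₂_map_right_iff,
      List.forall₂_same, Function.comp_apply] using
      fun m _ => S.mul.sop_singleton_listProd_subset S.mul_assoc a m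

theorem SOP_right_distrib_subset (a : R) :
    ∀ ll : List (List R), S.mul.sop (S.SOP ll) {a} ⊆ S.SOP (ll.map (· ++ [a]))
  | [] => by simp [SOP, Hyperop.sop]
  | l :: t => by
    refine (S.setFold_right_distrib_subset {a} _ _).trans (S.add.setFold_mono
      (S.mul.sop_listProd_singleton_subset a l) ?_)
    simpa only [List.map_map, List.forall₂_map_left_iff, List.forall₂_map_right_iff,
      List.forall₂_same, Function.comp_apply] using
      fun m _ => S.mul.sop_listProd_singleton_subset a m

variable {S} {ll : List (List R)}

theorem ValidExpr.singleton_cons (hll : S.ValidExpr ll) (a : R) : S.ValidExpr ([a] :: ll) :=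
  ⟨List.cons_ne_nil _ _, by simpa using hll.2⟩

theorem ValidExpr.append_singleton (hll : S.ValidExpr ll) (a : R) :
    S.ValidExpr (ll ++ [[a]]) :=
  ⟨by simp, by simpa [or_imp, forall_and] using hll.2⟩

theorem ValidExpr.map_cons (hll : S.ValidExpr ll) (a : R) : S.ValidExpr (ll.map (a :: ·)) :=
  ⟨by simpa using hll.1, by simp⟩

theorem ValidExpr.map_append_singleton (hll : S.ValidExpr ll) (a : R) :
    S.ValidExpr (ll.map (· ++ [a])) :=
  ⟨by simpa using hll.1, by simp⟩

variable (S)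

def sopRel (r : List (List R) → List (List R) → Prop) (x y : R) : Prop :=
  ∃ ll ll', S.ValidExpr ll ∧ r ll ll' ∧ x ∈ S.SOP ll ∧ y ∈ S.SOP ll'

theorem alphaPlus_eq_sopRel : S.alphaPlus = S.sopRel List.Perm := rfl

theorem alphaTimes_eq_sopRel : S.alphaTimes = S.sopRel (List.Forall₂ List.Perm) := rfl

variable {S} {r : List (List R) → List (List R) → Prop}

theorem add_stronglyRegular_sopRel
    (hcons : ∀ a {ll ll'}, r ll ll' → r ([a] :: ll) ([a] :: ll'))
    (hsnoc : ∀ a {ll ll'}, r ll ll' → r (ll ++ [[a]]) (ll' ++ [[a]])) :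
    S.add.StronglyRegular (S.sopRel r) := by
  rintro x y ⟨ll, ll', hll, hr, hx, hy⟩ a
  refine ⟨fun u hu v hv => ⟨_, _, hll.singleton_cons a, hcons a hr, ?_, ?_⟩,
    fun u hu v hv => ⟨_, _, hll.append_singleton a, hsnoc a hr, ?_, ?_⟩⟩
  · rw [S.SOP_singleton_cons a (S.ne_nil_of_mem_SOP hx)]
    exact S.add.mem_sop_of_mem rfl hx hu
  · rw [S.SOP_singleton_cons a (S.ne_nil_of_mem_SOP hy)]
    exact S.add.mem_sop_of_mem rfl hy hv
  · rw [S.SOP_append_singleton a (S.ne_nil_of_mem_SOP hx)]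
    exact S.add.mem_sop_of_mem hx rfl hu
  · rw [S.SOP_append_singleton a (S.ne_nil_of_mem_SOP hy)]
    exact S.add.mem_sop_of_mem hy rfl hv

theorem mul_stronglyRegular_sopRel
    (hcons : ∀ a {ll ll'}, r ll ll' → r (ll.map (a :: ·)) (ll'.map (a :: ·)))
    (hsnoc : ∀ a {ll ll'}, r ll ll' → r (ll.map (· ++ [a])) (ll'.map (· ++ [a]))) :
    S.mul.StronglyRegular (S.sopRel r) := by
  rintro x y ⟨ll, ll', hll, hr, hx, hy⟩ a
  exact ⟨fun u hu v hv => ⟨_, _, hll.map_cons a, hcons a hr,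
      S.SOP_left_distrib_subset a ll (S.mul.mem_sop_of_mem rfl hx hu),
      S.SOP_left_distrib_subset a ll' (S.mul.mem_sop_of_mem rfl hy hv)⟩,
    fun u hu v hv => ⟨_, _, hll.map_append_singleton a, hsnoc a hr,
      S.SOP_right_distrib_subset a ll (S.mul.mem_sop_of_mem hx rfl hu),
      S.SOP_right_distrib_subset a ll' (S.mul.mem_sop_of_mem hy rfl hv)⟩⟩

end Hyperring

/-- `α₊*` and `α×*` are strongly regular relations on both
`(R, +)` and `(R, ·)`. -/
theorem stmt8 {R : Type*} (S : Hyperring R) :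
    S.add.StronglyRegular (Relation.TransGen S.alphaPlus) ∧
    S.mul.StronglyRegular (Relation.TransGen S.alphaPlus) ∧
    S.add.StronglyRegular (Relation.TransGen S.alphaTimes) ∧
    S.mul.StronglyRegular (Relation.TransGen S.alphaTimes) := by
  rw [S.alphaPlus_eq_sopRel, S.alphaTimes_eq_sopRel]
  refine ⟨.transGen ?_, .transGen ?_, .transGen ?_, .transGen ?_⟩
  · exact Hyperring.add_stronglyRegular_sopRel (fun a _ _ h => h.cons [a])
      (fun a _ _ h => h.append_right [[a]])
  · exact Hyperring.mul_stronglyRegular_sopRel (fun a _ _ h => h.map _)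
      (fun a _ _ h => h.map _)
  · exact Hyperring.add_stronglyRegular_sopRel (fun a _ _ h => .cons (.refl [a]) h)
      (fun a _ _ h => List.rel_append h (.cons (.refl [a]) .nil))
  · exact Hyperring.mul_stronglyRegular_sopRel
      (fun a _ _ h => List.rel_map (fun _ _ hp => List.Perm.cons a hp) h)
      (fun a _ _ h => List.rel_map (fun _ _ hp => List.Perm.append_right [a] hp) h)
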